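/- Let $V$ be a 4-dimensional real vector space with dual basis $\alpha, \alpha^1, \alpha^2, \alpha^3$ of $V^*$. Suppose $\omega_i = \alpha\wedge\alpha^i + \sum_{(pqr)=(123)}\sigma_{ip}\alpha^q\wedge\alpha^r$ with $\sigma$ symmetric positive-definite, and $\omega_i^B = \theta\wedge\alpha^i + \sum_{(pqr)=(123)}B_{ip}\alpha^q\wedge\alpha^r$ where $\theta \in V^*$ satisfies $\theta \wedge \alpha^1\wedge\alpha^2\wedge\alpha^3 = \alpha\wedge\alpha^1\wedge\alpha^2\wedge\alpha^3$, and $B$ is a matrix with positive-definite symmetric part $\widehat{B}$. Then for every $s \in [0,1]$ and every nonzero $a \in \mathbb{R}^3$, the 2-form $a^i\big((1-s)\omega_i + s\,\omega_i^B\big)$ is nondegenerate, i.e. its wedge square is a nonzero multiple of $\alpha\wedge\alpha^1\wedge\alpha^2\wedge\alpha^3$. -/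

import Mathlib

/-!
Put `u = (1 - s) α + s θ` and `M = (1 - s) σ + s B`. The form `ω_i` depends linearly on the pair
`(α, σ)`, so the interpolated 2-form is `u ∧ v + η` with `v = aⁱ αᵢ` and
`η = Σ c_p α^q ∧ α^r`, `c = aᵀ M`. A product of two generators commutes with every generator,
and `η ∧ η = 0` because only three generators occur, so the square is
`2 u ∧ v ∧ η = 2 (a ⬝ c) u ∧ α¹ ∧ α² ∧ α³`, which is `2 (a ⬝ c) α ∧ α¹ ∧ α² ∧ α³` by the
hypothesis on `θ`. Finally `a ⬝ c = aᵀ M a = (1 - s) aᵀ σ a + s aᵀ B̂ a > 0`.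
-/

open ExteriorAlgebra Module

/-- The 2-form `β ∧ αⁱ + M_{i1} α²∧α³ + M_{i2} α³∧α¹ + M_{i3} α¹∧α²`
(indices shifted to `0,1,2`), as an element of the exterior algebra of `V*`. -/
noncomputable def omegaOf {V : Type*} [AddCommGroup V] [Module ℝ V]
    (β α1 α2 α3 : Module.Dual ℝ V) (M : Matrix (Fin 3) (Fin 3) ℝ) (i : Fin 3) :
    ExteriorAlgebra ℝ (Module.Dual ℝ V) :=
  ι ℝ β * ι ℝ (![α1, α2, α3] i)
    + M i 0 • (ι ℝ α2 * ι ℝ α3) + M i 1 • (ι ℝ α3 * ι ℝ α1) + M i 2 • (ι ℝ α1 * ι ℝ α2)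

open Matrix

namespace ExteriorAlgebra

variable {R M : Type*} [CommRing R] [AddCommGroup M] [Module R M]

theorem ι_mul_ι_swap (x y : M) : ι R y * ι R x = -(ι R x * ι R y) :=
  eq_neg_of_add_eq_zero_left (ι_add_mul_swap y x)

theorem commute_ι_ι_mul_ι (x y z : M) : Commute (ι R x) (ι R y * ι R z) := by
  calc ι R x * (ι R y * ι R z) = -(ι R y * ι R x) * ι R z := by rw [← mul_assoc, ι_mul_ι_swap y x]
    _ = ι R y * -(ι R x * ι R z) := by rw [neg_mul, mul_neg, mul_assoc]
    _ = ι R y * ι R z * ι R x := by rw [ι_mul_ι_swap z x, neg_neg, mul_assoc]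

theorem ι_mul_ι_mul_ι_cycle (x y z : M) : ι R x * (ι R y * ι R z) = ι R z * (ι R x * ι R y) := by
  rw [(commute_ι_ι_mul_ι z x y).eq, mul_assoc]

theorem ι_mul_ι_mul_self (x : M) (w : ExteriorAlgebra R M) : ι R x * (ι R x * w) = 0 := by
  rw [← mul_assoc, ι_sq_zero, zero_mul]

theorem ι_mul_ι_mul_ι_self (x y : M) : ι R x * (ι R y * ι R x) = 0 := by
  rw [ι_mul_ι_swap x y, mul_neg, ι_mul_ι_mul_self, neg_zero]

theorem ι_mul_ι_mul_ι_mul_ι_self (x y z : M) : ι R x * (ι R y * (ι R z * ι R x)) = 0 := by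
  rw [← mul_assoc (ι R y), ← (commute_ι_ι_mul_ι x y z).eq, ι_mul_ι_mul_self]

def cyclicForm (y : Fin 3 → M) (c : Fin 3 → R) : ExteriorAlgebra R M :=
  c 0 • (ι R (y 1) * ι R (y 2)) + c 1 • (ι R (y 2) * ι R (y 0)) + c 2 • (ι R (y 0) * ι R (y 1))

theorem commute_ι_cyclicForm (x : M) (y : Fin 3 → M) (c : Fin 3 → R) :
    Commute (ι R x) (cyclicForm y c) := by
  unfold cyclicForm
  refine .add_right (.add_right ?_ ?_) ?_ <;> exact .smul_right (commute_ι_ι_mul_ι _ _ _) _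

theorem cyclicForm_mul_self (y : Fin 3 → M) (c : Fin 3 → R) :
    cyclicForm y c * cyclicForm y c = 0 := by
  simp only [cyclicForm, mul_add, add_mul, smul_mul_smul_comm, mul_assoc, ι_mul_ι_mul_self,
    ι_mul_ι_mul_ι_self, ι_mul_ι_mul_ι_mul_ι_self, mul_zero, smul_zero, add_zero]

theorem ι_sum_mul_cyclicForm (y : Fin 3 → M) (a c : Fin 3 → R) :
    ι R (∑ i, a i • y i) * cyclicForm y c = (a ⬝ᵥ c) • (ι R (y 0) * (ι R (y 1) * ι R (y 2))) := by
  simp only [cyclicForm, Fin.sum_univ_three, map_add, map_smul, dotProduct, mul_add, add_mul,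
    smul_mul_smul_comm, ι_mul_ι_mul_self, ι_mul_ι_mul_ι_self, ι_mul_ι_mul_ι_cycle (y 1) (y 2) (y 0),
    ← ι_mul_ι_mul_ι_cycle (y 0) (y 1) (y 2), smul_zero, add_zero, zero_add, add_smul]

theorem mul_self_ι_mul_ι_add_cyclicForm (u : M) (y : Fin 3 → M) (a c : Fin 3 → R) :
    (ι R u * ι R (∑ i, a i • y i) + cyclicForm y c) *
      (ι R u * ι R (∑ i, a i • y i) + cyclicForm y c)
      = (2 * (a ⬝ᵥ c)) • (ι R u * ι R (y 0) * ι R (y 1) * ι R (y 2)) := by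
  set w := ∑ i, a i • y i
  set η := cyclicForm y c
  have hsq : ι R u * ι R w * (ι R u * ι R w) = 0 := by
    rw [mul_assoc, ← mul_assoc (ι R w), ι_mul_ι_swap u w, neg_mul, mul_neg, mul_assoc,
      ι_mul_ι_mul_self, neg_zero]
  have hcomm : Commute (ι R u * ι R w) η :=
    (commute_ι_cyclicForm u y c).mul_left (commute_ι_cyclicForm w y c)
  calc (ι R u * ι R w + η) * (ι R u * ι R w + η)
      = ι R u * ι R w * (ι R u * ι R w) + (ι R u * ι R w * η + η * (ι R u * ι R w)) + η * η := by
        simp only [add_mul, mul_add]; abel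
    _ = ι R u * (ι R w * η) + ι R u * (ι R w * η) := by
        rw [hsq, cyclicForm_mul_self, ← hcomm.eq, mul_assoc, zero_add, add_zero]
    _ = (2 * (a ⬝ᵥ c)) • (ι R u * ι R (y 0) * ι R (y 1) * ι R (y 2)) := by
        rw [ι_sum_mul_cyclicForm, mul_smul_comm, ← two_smul R, smul_smul]
        simp only [mul_assoc]

end ExteriorAlgebra

section Interpolation

variable {V : Type*} [AddCommGroup V] [Module ℝ V] (α1 α2 α3 : Module.Dual ℝ V)

theorem omegaOf_eq_ι_mul_ι_add_cyclicForm (β : Module.Dual ℝ V) (M : Matrix (Fin 3) (Fin 3) ℝ)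
    (i : Fin 3) :
    omegaOf β α1 α2 α3 M i = ι ℝ β * ι ℝ (![α1, α2, α3] i) + cyclicForm ![α1, α2, α3] (M i) := by
  rw [omegaOf, cyclicForm, add_assoc, add_assoc, add_assoc]
  rfl

theorem smul_omegaOf_add_smul_omegaOf (r s : ℝ) (α θ : Module.Dual ℝ V)
    (σ B : Matrix (Fin 3) (Fin 3) ℝ) (i : Fin 3) :
    r • omegaOf α α1 α2 α3 σ i + s • omegaOf θ α1 α2 α3 B i
      = omegaOf (r • α + s • θ) α1 α2 α3 (r • σ + s • B) i := by
  simp only [omegaOf, map_add, map_smul, add_mul, smul_mul_assoc, Matrix.add_apply,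
    Matrix.smul_apply, smul_eq_mul, add_smul, mul_smul]
  module

theorem sum_smul_omegaOf (β : Module.Dual ℝ V) (M : Matrix (Fin 3) (Fin 3) ℝ) (a : Fin 3 → ℝ) :
    ∑ i, a i • omegaOf β α1 α2 α3 M i
      = ι ℝ β * ι ℝ (∑ i, a i • ![α1, α2, α3] i) + cyclicForm ![α1, α2, α3] (a ᵥ* M) := by
  simp only [omegaOf_eq_ι_mul_ι_add_cyclicForm, cyclicForm, Fin.sum_univ_three, vecMul,
    dotProduct, map_add, map_smul, mul_add, mul_smul_comm, cons_val_zero, cons_val_one,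
    cons_val_two, tail_cons, head_cons]
  module

end Interpolation

theorem Matrix.dotProduct_lineMap_mulVec_pos {n : Type*} [Fintype n] {σ B : Matrix n n ℝ}
    (hσ : σ.PosDef) (hB : (((1:ℝ)/2) • (B + B.transpose)).PosDef) {s : ℝ}
    (hs : s ∈ Set.Icc (0:ℝ) 1) {x : n → ℝ} (hx : x ≠ 0) :
    0 < x ⬝ᵥ (((1 - s) • σ + s • B) *ᵥ x) := by
  have hσx : 0 < x ⬝ᵥ (σ *ᵥ x) := by simpa using hσ.dotProduct_mulVec_pos hx
  have hBx : 0 < x ⬝ᵥ (B *ᵥ x) := by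
    simpa [add_mulVec, smul_mulVec, dotProduct_add, dotProduct_transpose_mulVec, ← two_mul]
      using hB.dotProduct_mulVec_pos hx
  rw [add_mulVec, smul_mulVec, smul_mulVec, dotProduct_add, dotProduct_smul, dotProduct_smul]
  exact convex_Ioi (0:ℝ) hσx hBx (sub_nonneg.2 hs.2) hs.1 (sub_add_cancel 1 s)

theorem linear_interpolation_nondegenerate_general {V : Type*} [AddCommGroup V] [Module ℝ V]
    (α α1 α2 α3 θ : Module.Dual ℝ V)
    (σ B : Matrix (Fin 3) (Fin 3) ℝ)
    (hσ : σ.PosDef)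
    (hB : (((1:ℝ)/2) • (B + B.transpose)).PosDef)
    (hθ : ι ℝ θ * (ι ℝ α1 * ι ℝ α2 * ι ℝ α3) = ι ℝ α * (ι ℝ α1 * ι ℝ α2 * ι ℝ α3))
    (s : ℝ) (hs : s ∈ Set.Icc (0:ℝ) 1) (a : Fin 3 → ℝ) (ha : a ≠ 0) :
    ∃ c : ℝ, c ≠ 0 ∧
      (∑ i, a i • ((1 - s) • omegaOf α α1 α2 α3 σ i + s • omegaOf θ α1 α2 α3 B i)) *
      (∑ i, a i • ((1 - s) • omegaOf α α1 α2 α3 σ i + s • omegaOf θ α1 α2 α3 B i))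
        = c • (ι ℝ α * ι ℝ α1 * ι ℝ α2 * ι ℝ α3) := by
  set u := (1 - s) • α + s • θ
  set M := (1 - s) • σ + s • B
  have hu : ι ℝ u * (ι ℝ α1 * ι ℝ α2 * ι ℝ α3) = ι ℝ α * (ι ℝ α1 * ι ℝ α2 * ι ℝ α3) := by
    rw [map_add, map_smul, map_smul, add_mul, smul_mul_assoc, smul_mul_assoc, hθ, ← add_smul,
      sub_add_cancel, one_smul]
  refine ⟨2 * (a ⬝ᵥ (a ᵥ* M)), ?_, ?_⟩
  · rw [dotProduct_comm, ← dotProduct_mulVec]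
    exact mul_ne_zero two_ne_zero (dotProduct_lineMap_mulVec_pos hσ hB hs ha).ne'
  · simp only [smul_omegaOf_add_smul_omegaOf, sum_smul_omegaOf]
    rw [mul_self_ι_mul_ι_add_cyclicForm]
    simp only [cons_val_zero, cons_val_one, cons_val_two, tail_cons, head_cons, mul_assoc] at hu ⊢
    rw [hu]

/-- pointwise nondegeneracy along the linear interpolation. With
`ω_i = α∧αⁱ + Σ σ_{ip} α^q∧α^r` (`σ` symmetric positive-definite),
`ω_i^B = θ∧αⁱ + Σ B_{ip} α^q∧α^r` where `θ∧α¹∧α²∧α³ = α∧α¹∧α²∧α³` and the symmetric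
part of `B` is positive-definite, for every `s ∈ [0,1]` and nonzero `a ∈ ℝ³` the 2-form
`aⁱ((1-s)ω_i + s ω_i^B)` has wedge square a nonzero multiple of `α∧α¹∧α²∧α³`. -/
theorem linear_interpolation_nondegenerate {V : Type*} [AddCommGroup V] [Module ℝ V]
    [FiniteDimensional ℝ V] (hdim : finrank ℝ V = 4)
    (α α1 α2 α3 θ : Module.Dual ℝ V)
    (b : Basis (Fin 4) ℝ (Module.Dual ℝ V))
    (hb : b 0 = α ∧ b 1 = α1 ∧ b 2 = α2 ∧ b 3 = α3)
    (σ B : Matrix (Fin 3) (Fin 3) ℝ)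
    (hσs : σ.IsSymm) (hσ : σ.PosDef)
    (hB : (((1:ℝ)/2) • (B + B.transpose)).PosDef)
    (hθ : ι ℝ θ * (ι ℝ α1 * ι ℝ α2 * ι ℝ α3) = ι ℝ α * (ι ℝ α1 * ι ℝ α2 * ι ℝ α3))
    (s : ℝ) (hs : s ∈ Set.Icc (0:ℝ) 1) (a : Fin 3 → ℝ) (ha : a ≠ 0) :
    ∃ c : ℝ, c ≠ 0 ∧
      (∑ i, a i • ((1 - s) • omegaOf α α1 α2 α3 σ i + s • omegaOf θ α1 α2 α3 B i)) *
      (∑ i, a i • ((1 - s) • omegaOf α α1 α2 α3 σ i + s • omegaOf θ α1 α2 α3 B i))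
        = c • (ι ℝ α * ι ℝ α1 * ι ℝ α2 * ι ℝ α3) :=
  linear_interpolation_nondegenerate_general α α1 α2 α3 θ σ B hσ hB hθ s hs a ha
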